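/- A free filter ℱ on ℕ equals the Fréchet filter of cofinite subsets of ℕ if and only if every closed subsemilattice of the topological semilattice ℕ_{ℱ,min} × E₂ is 𝓐𝓗-complete. -/

import Mathlib

open Topology Set

/-- A filter is free if the intersection of all its members is empty. -/
def FreeF (F : Filter ℕ) : Prop := ⋂₀ F.sets = ∅

/-- The topology on ℕ_ℱ = ℕ ∪ {ℱ} (modelled as `Option ℕ`, with `none` the point ℱ):
all points of ℕ are isolated, and the sets F ∪ {ℱ}, F ∈ ℱ, form a neighbourhood base at ℱ. -/
def nfTop (F : Filter ℕ) : TopologicalSpace (Option ℕ) where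
  IsOpen U := none ∈ U → {n : ℕ | some n ∈ U} ∈ F
  isOpen_univ := fun _ => by simp
  isOpen_inter := fun U V hU hV h => Filter.inter_mem (hU h.1) (hV h.2)
  isOpen_sUnion := fun S hS h => by
    obtain ⟨U, hUS, hnU⟩ := h
    exact Filter.mem_of_superset (hS U hUS hnU) fun n hn => ⟨U, hUS, hn⟩

/-- min on ℕ extended to ℕ_ℱ by min(n,ℱ) = n, min(ℱ,ℱ) = ℱ. -/
def minOp : Option ℕ → Option ℕ → Option ℕ
  | none, y => y
  | some a, none => some a
  | some a, some b => some (min a b)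

/-- max on ℕ extended to ℕ_ℱ by max(n,ℱ) = ℱ = max(ℱ,ℱ). -/
def maxOp : Option ℕ → Option ℕ → Option ℕ
  | none, _ => none
  | _, none => none
  | some a, some b => some (max a b)

/-- `X` with operation `op` is a (Hausdorff) topological semilattice. -/
structure IsTopSemilattice (X : Type*) [TopologicalSpace X] (op : X → X → X) : Prop where
  t2 : T2Space X
  comm : ∀ a b, op a b = op b a
  idem : ∀ a, op a a = a
  assoc : ∀ a b c, op (op a b) c = op a (op b c)
  cont : Continuous fun p : X × X => op p.1 p.2

/-- 𝓗-completeness: the image under any topological embedding which is a semilattice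
homomorphism into a Hausdorff topological semilattice is closed. -/
def HComplete (X : Type*) [TopologicalSpace X] (op : X → X → X) : Prop :=
  ∀ (Y : Type*) [TopologicalSpace Y] (opY : Y → Y → Y), IsTopSemilattice Y opY →
    ∀ f : X → Y, Topology.IsEmbedding f →
      (∀ a b, f (op a b) = opY (f a) (f b)) → IsClosed (Set.range f)

/-- 𝓐𝓗-completeness: the image under any continuous semilattice homomorphism
into a Hausdorff topological semilattice is closed. -/
def AHComplete (X : Type*) [TopologicalSpace X] (op : X → X → X) : Prop :=
  ∀ (Y : Type*) [TopologicalSpace Y] (opY : Y → Y → Y), IsTopSemilattice Y opY →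
    ∀ f : X → Y, Continuous f →
      (∀ a b, f (op a b) = opY (f a) (f b)) → IsClosed (Set.range f)

/-- The product topology on ℕ_{ℱ,min} × E₂ (E₂ = {0,1} discrete, modelled as `Bool`). -/
def prodTopB (F : Filter ℕ) : TopologicalSpace (Option ℕ × Bool) :=
  @instTopologicalSpaceProd _ _ (nfTop F) inferInstance

/-- The coordinatewise semilattice operation on ℕ_{ℱ,min} × E₂ (min on both coordinates). -/
def pOpB (p q : Option ℕ × Bool) : Option ℕ × Bool := (minOp p.1 q.1, p.2 && q.2)

/-- The subset E = (ℕ_{ℱ,min} × {0}) ∪ ((ℕ \ F) × {1}). -/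
def EsetB (Fs : Set ℕ) : Set (Option ℕ × Bool) :=
  (Set.univ ×ˢ {false}) ∪ ((some '' Fsᶜ) ×ˢ {true})

/-- The ideal I = ℕ_{ℱ,min} × {0}. -/
def IsetB : Set (Option ℕ × Bool) := Set.univ ×ˢ {false}

/-!
For the cofinite filter, `ℕ_ℱ` is the one-point compactification of the discrete `ℕ`, i.e. `ℕ∞`
with its order topology, and `min` is continuous there. So `ℕ_ℱ × E₂` is a compact Hausdorff
topological semilattice: a closed subsemilattice is compact, and so are its continuous images in
Hausdorff spaces.

Conversely, a free filter `ℱ` contains every cofinite set; if `ℱ ≠ cofinite`, pick `A ∈ ℱ` with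
infinite complement. The set `E = (ℕ_ℱ × {0}) ∪ ((ℕ \ A) × {1})` is a closed subsemilattice of
`ℕ_ℱ × E₂`, and the identity of `E` into the coarser `ℕ_cofinite × E₂` is a continuous
homomorphism whose image is not closed: `(ℱ, 1)` is a limit of the points `(n, 1)`, `n ∉ A`.
-/

open Filter

universe u v

section AHComplete

variable {X : Type u} {tX : TopologicalSpace X} {op : X → X → X}

theorem ahComplete_of_compactSpace [CompactSpace X] : AHComplete X op :=
  fun _ _ _ hY _ hf _ => haveI := hY.t2; (isCompact_range hf).isClosed

theorem IsTopSemilattice.ulift {Y : Type*} [TopologicalSpace Y] {opY : Y → Y → Y}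
    (hY : IsTopSemilattice Y opY) :
    IsTopSemilattice (ULift.{v} Y) fun a b => ULift.up (opY a.down b.down) where
  t2 := haveI := hY.t2; inferInstance
  comm _ _ := congrArg ULift.up (hY.comm _ _)
  idem _ := congrArg ULift.up (hY.idem _)
  assoc _ _ _ := congrArg ULift.up (hY.assoc _ _ _)
  cont := continuous_uliftUp.comp <|
    hY.cont.comp (continuous_uliftDown.prodMap continuous_uliftDown)

/-- `AHComplete.{u, v}` only quantifies over targets in `Type v`; `ULift` brings `Y` there. -/
theorem AHComplete.isClosed_range (h : AHComplete.{u, v} X op) {Y : Type} {tY : TopologicalSpace Y}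
    {opY : Y → Y → Y} (hY : IsTopSemilattice Y opY) {f : X → Y} (hf : Continuous f)
    (hhom : ∀ a b, f (op a b) = opY (f a) (f b)) : IsClosed (range f) := by
  have hclosed := h (ULift.{v} Y) _ hY.ulift (ULift.up ∘ f) (continuous_uliftUp.comp hf)
    fun a b => congrArg ULift.up (hhom a b)
  rw [range_comp] at hclosed
  simpa only [preimage_image_eq _ ULift.up_injective] using hclosed.preimage continuous_uliftUp

end AHComplete

theorem nfTop_mono {F G : Filter ℕ} (h : F ≤ G) : nfTop F ≤ nfTop G :=
  fun _ hU hnone => h (hU hnone)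

theorem prodTopB_mono {F G : Filter ℕ} (h : F ≤ G) : prodTopB F ≤ prodTopB G :=
  inf_le_inf (induced_mono (nfTop_mono h)) le_rfl

/-- As types, `Option ℕ = WithTop ℕ = ℕ∞`. -/
theorem nfTop_cofinite : nfTop cofinite = (inferInstance : TopologicalSpace ℕ∞) := by
  refine TopologicalSpace.ext (funext fun (U : Set ℕ∞) => propext ?_)
  change (⊤ ∈ U → {n : ℕ | (n : ℕ∞) ∈ U} ∈ cofinite) ↔ IsOpen U
  rw [Nat.cofinite_eq_atTop, isOpen_iff_mem_nhds]
  constructor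
  · intro h x hx
    by_cases hxtop : x = ⊤
    · subst hxtop
      obtain ⟨N, hN⟩ := mem_atTop_sets.1 (h hx)
      refine mem_of_superset (Ioi_mem_nhds (ENat.natCast_lt_top N)) fun y hy => ?_
      induction y using ENat.recTopCoe with
      | top => exact hx
      | coe m => exact hN m (by exact_mod_cast (show (N : ℕ∞) < m from hy).le)
    · exact (ENat.mem_nhds_iff hxtop).2 hx
  · exact fun h htop => ENat.tendsto_natCast_nhds_top (h ⊤ htop)

theorem prodTopB_cofinite :
    prodTopB cofinite = (inferInstance : TopologicalSpace (ℕ∞ × Bool)) := by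
  rw [prodTopB, nfTop_cofinite]
  rfl

theorem pOpB_eq_inf : pOpB = fun p q : ℕ∞ × Bool => p ⊓ q := by
  funext ⟨a, _⟩ ⟨b, _⟩
  cases a <;> cases b <;> rfl

theorem isTopSemilattice_prod_bool_inf {α : Type*} [LinearOrder α] [TopologicalSpace α]
    [OrderClosedTopology α] : IsTopSemilattice (α × Bool) (· ⊓ ·) where
  t2 := inferInstance
  comm := inf_comm
  idem := inf_idem
  assoc := inf_assoc
  cont := (continuous_fst.fst.min continuous_snd.fst).prodMk <|
    (continuous_of_discreteTopology (f := fun q : Bool × Bool => q.1 ⊓ q.2)).comp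
      (continuous_fst.snd.prodMk continuous_snd.snd)

theorem isTopSemilattice_pOpB_cofinite : @IsTopSemilattice _ (prodTopB cofinite) pOpB := by
  rw [prodTopB_cofinite, pOpB_eq_inf]
  exact isTopSemilattice_prod_bool_inf (α := ℕ∞)

theorem compactSpace_prodTopB_cofinite : @CompactSpace _ (prodTopB cofinite) := by
  rw [prodTopB_cofinite]
  exact (inferInstance : CompactSpace (ℕ∞ × Bool))

section EsetB

variable {A : Set ℕ}

theorem compl_EsetB (A : Set ℕ) : (EsetB A)ᶜ = insert none (some '' A) ×ˢ {true} := by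
  ext ⟨x, b⟩
  cases b <;> cases x <;> simp [EsetB]

theorem isClosed_EsetB {F : Filter ℕ} (hA : A ∈ F) : IsClosed[prodTopB F] (EsetB A) := by
  let _ := nfTop F
  have hopen : IsOpen (insert none (some '' A)) :=
    fun _ => mem_of_superset hA fun n hn => by simp [hn]
  exact isOpen_compl_iff.1 (compl_EsetB A ▸ hopen.prod (isOpen_discrete {true}))

theorem pOpB_mem_EsetB (A : Set ℕ) : ∀ p ∈ EsetB A, ∀ q ∈ EsetB A, pOpB p q ∈ EsetB A := by
  rintro p (⟨-, hp⟩ | ⟨⟨m, hm, hp₁⟩, hp₂⟩) q hq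
  · left
    simp_all [pOpB]
  rcases hq with ⟨-, hq⟩ | ⟨⟨k, hk, hq₁⟩, hq₂⟩
  · left
    simp_all [pOpB]
  · right
    refine ⟨⟨min m k, min_rec' (· ∈ Aᶜ) hm hk, ?_⟩, ?_⟩
    · simp [pOpB, ← hp₁, ← hq₁, minOp]
    · simp_all [pOpB]

theorem not_isClosed_EsetB_cofinite (hA : A ∉ cofinite) :
    ¬ IsClosed[prodTopB cofinite] (EsetB A) := by
  rw [prodTopB_cofinite]
  intro (hclosed : IsClosed (X := ℕ∞ × Bool) (EsetB A))
  have hfreq : ∃ᶠ n : ℕ in atTop, ((n : ℕ∞), true) ∈ EsetB A :=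
    (Nat.frequently_atTop_iff_infinite.2 hA).mono fun n hn => Or.inr ⟨⟨n, hn, rfl⟩, rfl⟩
  have hlim := hclosed.mem_of_frequently_of_tendsto hfreq
    (ENat.tendsto_natCast_nhds_top.prodMk_nhds tendsto_const_nhds)
  rcases hlim with ⟨-, hfalse⟩ | ⟨⟨n, -, hn⟩, -⟩
  · simp at hfalse
  · exact Option.some_ne_none n hn

end EsetB

/-- a free filter ℱ on ℕ is the Fréchet filter of cofinite sets if and only if
every closed subsemilattice of ℕ_{ℱ,min} × E₂ is 𝓐𝓗-complete. -/
theorem cofinite_iff_closed_subsemilattices_AHComplete (F : Filter ℕ) (hF : FreeF F) :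
    F = Filter.cofinite ↔
      ∀ E : Set (Option ℕ × Bool), @IsClosed _ (prodTopB F) E →
        ∀ hsub : ∀ p ∈ E, ∀ q ∈ E, pOpB p q ∈ E,
          @AHComplete E (@instTopologicalSpaceSubtype _ _ (prodTopB F))
            (fun a b => ⟨pOpB a.1 b.1, hsub a.1 a.2 b.1 b.2⟩) := by
  constructor
  · rintro rfl E hE _
    let _ := prodTopB cofinite
    have := compactSpace_prodTopB_cofinite
    have := isCompact_iff_compactSpace.1 hE.isCompact
    exact ahComplete_of_compactSpace
  · intro h
    have hle : F ≤ cofinite := le_cofinite_iff_ker.2 hF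
    refine le_antisymm hle (not_not.1 fun hne => ?_)
    obtain ⟨A, hAF, hA⟩ := Filter.not_le.1 hne
    refine not_isClosed_EsetB_cofinite hA ?_
    have hrange := (h _ (isClosed_EsetB hAF) (pOpB_mem_EsetB A)).isClosed_range
      isTopSemilattice_pOpB_cofinite
      (continuous_iff_le_induced.2 (induced_mono (prodTopB_mono hle))) fun _ _ => rfl
    rwa [Subtype.range_coe] at hrange
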